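/- For every sequence (ε_n) of positive reals there exists a Hausdorff function h such that: if a metric space X (without isolated points) satisfies H^h(X) = 0, then X admits a countable cover {U_n} with diam(U_n) ≤ ε_n for all n, such that every point of X belongs to infinitely many U_n (a λ-cover). -/

import Mathlib

open Set Filter MeasureTheory ENNReal

/-- A Hausdorff (gauge) function: nondecreasing, right-continuous on `[0,∞)`,
vanishing exactly at `0`. -/
def IsHausdorffFn (h : ℝ → ℝ) : Prop :=
  (∀ r, 0 ≤ r → 0 ≤ h r) ∧ MonotoneOn h (Set.Ici 0) ∧
  (∀ r, 0 ≤ r → ContinuousWithinAt h (Set.Ici r) r) ∧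
  ∀ r, 0 ≤ r → (h r = 0 ↔ r = 0)

/-- The `h`-dimensional Hausdorff measure associated to a gauge function `h`. -/
noncomputable def hMeas (h : ℝ → ℝ) {X : Type*} [EMetricSpace X] [MeasurableSpace X]
    [BorelSpace X] : Measure X :=
  Measure.mkMetric (fun r => ENNReal.ofReal (h r.toReal))

open Topology Function Metric

/-!
Take a positive antitone sequence `d ≤ ε` tending to `0` and the step gauge `h(r) = 1/(N(r)+1)`,
where `N(r)` is the first index with `d N ≤ r`; then `(n+1) h(r) < 1` forces `r < d n ≤ ε n`.
If `H^h(X) = 0`, for every `k` there is a cover `(t k i)ᵢ` of `X` by sets of finite diameter with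
`∑ᵢ h(diam t k i) < 2^-(k+2)`. Ranked by decreasing gauge, the piece of rank `ρ` has gauge at most
`∑/(ρ+1)`, so the `k`-th cover can be placed injectively into the slots `n = 2ᵏ(2m+1) - 1`,
`m ∈ ℕ`, keeping `(n+1) h(diam) < 1` for the piece in slot `n`. The slot classes of different `k`
are disjoint and every point lies in a piece of every cover, hence in infinitely many `Uₙ`.
-/

noncomputable def gaugeIndex (d : ℕ → ℝ) (r : ℝ) : ℕ := sInf {n | d n ≤ r}

noncomputable def stepGauge (d : ℕ → ℝ) (r : ℝ) : ℝ :=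
  if 0 < r then ((gaugeIndex d r : ℝ) + 1)⁻¹ else 0

section StepGauge

variable {d : ℕ → ℝ}

theorem gaugeIndex_le_iff (hd : Antitone d) (hd0 : Tendsto d atTop (𝓝 0)) {r : ℝ} (hr : 0 < r)
    {n : ℕ} : gaugeIndex d r ≤ n ↔ d n ≤ r := by
  refine ⟨fun h => (hd h).trans ?_, fun h => Nat.sInf_le h⟩
  obtain ⟨m, hm⟩ := (hd0.eventually (gt_mem_nhds hr)).exists
  exact Nat.sInf_mem (s := {n | d n ≤ r}) ⟨m, hm.le⟩

theorem lt_gaugeIndex_iff (hd : Antitone d) (hd0 : Tendsto d atTop (𝓝 0)) {r : ℝ} (hr : 0 < r)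
    {n : ℕ} : n < gaugeIndex d r ↔ r < d n := by
  simpa only [not_le] using (gaugeIndex_le_iff hd hd0 hr).not

theorem gaugeIndex_le_gaugeIndex (hd : Antitone d) (hd0 : Tendsto d atTop (𝓝 0)) {r r' : ℝ}
    (hr : 0 < r) (hrr' : r ≤ r') : gaugeIndex d r' ≤ gaugeIndex d r :=
  (gaugeIndex_le_iff hd hd0 (hr.trans_le hrr')).2 <|
    ((gaugeIndex_le_iff hd hd0 hr).1 le_rfl).trans hrr'

theorem stepGauge_nonneg (r : ℝ) : 0 ≤ stepGauge d r := by
  unfold stepGauge; split_ifs <;> positivity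

theorem stepGauge_eq_zero_iff {r : ℝ} (hr : 0 ≤ r) : stepGauge d r = 0 ↔ r = 0 := by
  unfold stepGauge
  split_ifs with h
  · simp only [inv_eq_zero, h.ne', iff_false]; positivity
  · simp only [true_iff]; linarith

theorem stepGauge_monotoneOn (hd : Antitone d) (hd0 : Tendsto d atTop (𝓝 0)) :
    MonotoneOn (stepGauge d) (Ici 0) := by
  intro r hr r' _ hrr'
  rcases (mem_Ici.1 hr).eq_or_lt with rfl | hr
  · simpa [stepGauge] using stepGauge_nonneg r'
  · simp only [stepGauge, hr, hr.trans_le hrr', if_true]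
    gcongr
    exact_mod_cast gaugeIndex_le_gaugeIndex hd hd0 hr hrr'

theorem lt_of_mul_stepGauge_lt_one (hpos : ∀ n, 0 < d n) (hd : Antitone d)
    (hd0 : Tendsto d atTop (𝓝 0)) {r : ℝ} {n : ℕ} (h : (n + 1) * stepGauge d r < 1) : r < d n := by
  unfold stepGauge at h
  split_ifs at h with hr
  · rw [← lt_gaugeIndex_iff hd hd0 hr]
    rw [← div_eq_mul_inv, div_lt_one (by positivity)] at h
    exact_mod_cast (add_lt_add_iff_right 1).1 h
  · exact (not_lt.1 hr).trans_lt (hpos n)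

theorem lt_ofReal_of_mul_ofReal_stepGauge_lt_one (hpos : ∀ n, 0 < d n) (hd : Antitone d)
    (hd0 : Tendsto d atTop (𝓝 0)) {r : ℝ≥0∞} (hr : r ≠ ∞) {n : ℕ}
    (h : (n + 1 : ℝ≥0∞) * ENNReal.ofReal (stepGauge d r.toReal) < 1) :
    r < ENNReal.ofReal (d n) := by
  rw [← ENNReal.ofReal_toReal hr, ENNReal.ofReal_lt_ofReal_iff (hpos n)]
  refine lt_of_mul_stepGauge_lt_one hpos hd hd0 ?_
  rwa [← ENNReal.ofReal_lt_one, ENNReal.ofReal_mul (by positivity), ENNReal.ofReal_add,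
    ENNReal.ofReal_natCast, ENNReal.ofReal_one] <;> positivity

theorem tendsto_gaugeIndex_nhdsGT_zero (hpos : ∀ n, 0 < d n) (hd : Antitone d)
    (hd0 : Tendsto d atTop (𝓝 0)) : Tendsto (gaugeIndex d) (𝓝[>] 0) atTop := by
  refine tendsto_atTop.2 fun n => ?_
  filter_upwards [self_mem_nhdsWithin, nhdsWithin_le_nhds (gt_mem_nhds (hpos n))] with r hr hrn
  exact ((lt_gaugeIndex_iff hd hd0 hr).2 hrn).le

theorem continuousWithinAt_stepGauge (hpos : ∀ n, 0 < d n) (hd : Antitone d)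
    (hd0 : Tendsto d atTop (𝓝 0)) {r : ℝ} (hr : 0 ≤ r) :
    ContinuousWithinAt (stepGauge d) (Ici r) r := by
  rcases hr.eq_or_lt with rfl | hr
  · rw [← continuousWithinAt_Ioi_iff_Ici, ContinuousWithinAt, stepGauge, if_neg (lt_irrefl 0)]
    refine ((tendsto_inv_atTop_zero.comp (tendsto_atTop_add_const_right _ 1
      (tendsto_natCast_atTop_atTop.comp (tendsto_gaugeIndex_nhdsGT_zero hpos hd hd0)))).congr' ?_)
    filter_upwards [self_mem_nhdsWithin] with s hs
    simp [stepGauge, mem_Ioi.1 hs]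
  · have hle : ∀ᶠ s in 𝓝 r, gaugeIndex d r ≤ gaugeIndex d s := by
      rcases hN : gaugeIndex d r with _ | m
      · exact .of_forall fun _ => Nat.zero_le _
      have hrm : r < d m := (lt_gaugeIndex_iff hd hd0 hr).1 (hN ▸ m.lt_succ_self)
      filter_upwards [gt_mem_nhds hrm, eventually_gt_nhds hr] with s hsm hs
      exact (lt_gaugeIndex_iff hd hd0 hs).2 hsm
    refine continuousWithinAt_const.congr_of_eventuallyEq ?_ rfl
    filter_upwards [nhdsWithin_le_nhds hle, self_mem_nhdsWithin] with s hs hrs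
    rw [stepGauge, stepGauge, if_pos hr, if_pos (hr.trans_le hrs),
      (gaugeIndex_le_gaugeIndex hd hd0 hr hrs).antisymm hs]

theorem isHausdorffFn_stepGauge (hpos : ∀ n, 0 < d n) (hd : Antitone d)
    (hd0 : Tendsto d atTop (𝓝 0)) : IsHausdorffFn (stepGauge d) :=
  ⟨fun r _ => stepGauge_nonneg r, stepGauge_monotoneOn hd hd0,
    fun _ => continuousWithinAt_stepGauge hpos hd hd0, fun _ => stepGauge_eq_zero_iff⟩

end StepGauge

noncomputable def gaugeSeq (ε : ℕ → ℝ) : ℕ → ℝ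
  | 0 => min (ε 0) 1
  | n + 1 => min (gaugeSeq ε n) (min (ε (n + 1)) (2⁻¹ ^ (n + 1)))

section GaugeSeq

variable {ε : ℕ → ℝ}

theorem gaugeSeq_le_min (n : ℕ) : gaugeSeq ε n ≤ min (ε n) (2⁻¹ ^ n) := by
  cases n with
  | zero => simp [gaugeSeq]
  | succ n => exact min_le_right _ _

theorem gaugeSeq_le (n : ℕ) : gaugeSeq ε n ≤ ε n :=
  (gaugeSeq_le_min n).trans (min_le_left _ _)

theorem gaugeSeq_pos (hε : ∀ n, 0 < ε n) : ∀ n, 0 < gaugeSeq ε n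
  | 0 => lt_min (hε 0) one_pos
  | n + 1 => lt_min (gaugeSeq_pos hε n) (lt_min (hε (n + 1)) (by positivity))

theorem gaugeSeq_antitone : Antitone (gaugeSeq ε) :=
  antitone_nat_of_succ_le fun _ => min_le_left _ _

theorem tendsto_gaugeSeq (hε : ∀ n, 0 < ε n) : Tendsto (gaugeSeq ε) atTop (𝓝 0) :=
  squeeze_zero (fun n => (gaugeSeq_pos hε n).le)
    (fun n => (gaugeSeq_le_min n).trans (min_le_right _ _))
    (tendsto_pow_atTop_nhds_zero_of_lt_one (by norm_num) (by norm_num))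

end GaugeSeq

theorem ncard_mul_le_tsum {ι : Type*} {a : ι → ℝ≥0∞} {s : Set ι} {c : ℝ≥0∞}
    (h : ∀ j ∈ s, c ≤ a j) : s.ncard * c ≤ ∑' j, a j := by
  rcases s.finite_or_infinite with hs | hs
  · calc (s.ncard : ℝ≥0∞) * c = ∑ _j ∈ hs.toFinset, c := by
          rw [Finset.sum_const, nsmul_eq_mul, ncard_eq_toFinset_card s hs]
      _ ≤ ∑ j ∈ hs.toFinset, a j := Finset.sum_le_sum fun j hj => h j (hs.mem_toFinset.1 hj)
      _ ≤ ∑' j, a j := ENNReal.sum_le_tsum _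
  · simp [hs.ncard]

section DescRank

variable (a : ℕ → ℝ≥0∞)

def descRankKey (i : ℕ) : ℝ≥0∞ᵒᵈ ×ₗ ℕ := toLex (OrderDual.toDual (a i), i)

noncomputable def descRank (i : ℕ) : ℕ := {j | descRankKey a j < descRankKey a i}.ncard

variable {a}

theorem descRankKey_injective : Injective (descRankKey a) := fun _ _ h =>
  congrArg (fun p => (ofLex p).2) h

theorem le_of_descRankKey_le {i j : ℕ} (h : descRankKey a j ≤ descRankKey a i) : a i ≤ a j := by
  rcases Prod.Lex.le_iff.1 h with h | h
  · exact (OrderDual.toDual_lt_toDual.1 h).le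
  · exact OrderDual.toDual_le_toDual.1 h.1.le

theorem finite_descRankKey_le (hsum : ∑' j, a j ≠ ∞) {i : ℕ} (hi : a i ≠ 0) :
    {j | descRankKey a j ≤ descRankKey a i}.Finite :=
  (ENNReal.finite_const_le_of_tsum_ne_top hsum hi).subset fun _ => le_of_descRankKey_le

theorem descRank_add_one_mul_le_tsum (hsum : ∑' j, a j ≠ ∞) {i : ℕ} (hi : a i ≠ 0) :
    (descRank a i + 1) * a i ≤ ∑' j, a j := by
  have hins : insert i {j | descRankKey a j < descRankKey a i} =
      {j | descRankKey a j ≤ descRankKey a i} := by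
    ext j
    simp [le_iff_eq_or_lt, descRankKey_injective.eq_iff]
  have hcard : descRank a i + 1 = {j | descRankKey a j ≤ descRankKey a i}.ncard := by
    rw [← hins, ncard_insert_of_notMem (by simp) ((finite_descRankKey_le hsum hi).subset ?_)]
    · rfl
    · exact fun j (hj : descRankKey a j < descRankKey a i) => hj.le
  exact_mod_cast hcard ▸ ncard_mul_le_tsum fun j => le_of_descRankKey_le

theorem descRank_lt_descRank (hsum : ∑' j, a j ≠ ∞) {i i' : ℕ} (hi' : a i' ≠ 0)
    (h : descRankKey a i < descRankKey a i') : descRank a i < descRank a i' := by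
  refine ncard_lt_ncard
    ⟨fun j hj => lt_trans hj h, fun hsub => lt_irrefl (descRankKey a i) (hsub h)⟩
    ((finite_descRankKey_le hsum hi').subset fun j (hj : descRankKey a j < descRankKey a i') =>
      hj.le)

theorem injOn_descRank (hsum : ∑' j, a j ≠ ∞) : InjOn (descRank a) {i | a i ≠ 0} := by
  intro i hi i' hi' h
  rcases lt_trichotomy (descRankKey a i) (descRankKey a i') with hlt | heq | hlt
  · exact absurd h (descRank_lt_descRank hsum hi' hlt).ne
  · exact descRankKey_injective heq
  · exact absurd h (descRank_lt_descRank hsum hi hlt).ne'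

end DescRank

theorem exists_injective_add_one_mul_le_two_mul_tsum (a : ℕ → ℝ≥0∞) :
    ∃ σ : ℕ → ℕ, Injective σ ∧ ∀ i, (σ i + 1 : ℝ≥0∞) * a i ≤ 2 * ∑' j, a j := by
  by_cases hsum : ∑' j, a j = ∞
  · exact ⟨id, injective_id, fun i => by simp [hsum]⟩
  refine ⟨fun i => if a i = 0 then 2 * i + 1 else 2 * descRank a i, fun i j hij => ?_, fun i => ?_⟩
  · simp only at hij
    split_ifs at hij with hi hj hj
    · omega
    · omega
    · omega
    · exact injOn_descRank hsum hi hj (by omega)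
  · simp only
    split_ifs with hi
    · simp [hi]
    have hodd : ((2 * descRank a i : ℕ) + 1 : ℝ≥0∞) ≤ 2 * (descRank a i + 1) := by
      exact_mod_cast (by omega : 2 * descRank a i + 1 ≤ 2 * (descRank a i + 1))
    calc ((2 * descRank a i : ℕ) + 1 : ℝ≥0∞) * a i ≤ 2 * ((descRank a i + 1) * a i) := by
          rw [← mul_assoc]; gcongr
      _ ≤ 2 * ∑' j, a j := by gcongr; exact descRank_add_one_mul_le_tsum hsum hi

def twoAdicPair (k m : ℕ) : ℕ := 2 ^ k * (2 * m + 1) - 1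

theorem twoAdicPair_injective : Injective (uncurry twoAdicPair) := by
  rintro ⟨k, m⟩ ⟨k', m'⟩ h
  have hpos : ∀ k m : ℕ, 0 < 2 ^ k * (2 * m + 1) := fun _ _ => by positivity
  replace h : 2 ^ k * (2 * m + 1) = 2 ^ k' * (2 * m' + 1) := by
    simp only [uncurry_apply_pair, twoAdicPair] at h
    have := hpos k m; have := hpos k' m'; omega
  have hval : ∀ k m : ℕ, padicValNat 2 (2 ^ k * (2 * m + 1)) = k := fun k m => by
    rw [padicValNat.mul (by positivity) (by positivity), padicValNat.prime_pow,
      padicValNat.eq_zero_of_not_dvd (by omega), add_zero]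
  obtain rfl : k = k' := by rw [← hval k m, h, hval]
  simp only [Prod.mk.injEq, true_and]
  have := Nat.eq_of_mul_eq_mul_left (by positivity) h
  omega

theorem twoAdicPair_add_one_le (k m : ℕ) : twoAdicPair k m + 1 ≤ 2 ^ (k + 1) * (m + 1) := by
  rw [twoAdicPair, Nat.sub_add_cancel (Nat.one_le_iff_ne_zero.2 (by positivity)), pow_succ,
    mul_assoc]
  gcongr
  omega

theorem exists_cover_tsum_lt_of_mkMetric_eq_zero {X : Type*} [EMetricSpace X] [MeasurableSpace X]
    [BorelSpace X] {m : ℝ≥0∞ → ℝ≥0∞} (hm : m 0 = 0) {s : Set X}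
    (hs : Measure.mkMetric m s = 0) {δ : ℝ≥0∞} (hδ : 0 < δ) :
    ∃ t : ℕ → Set X, s ⊆ ⋃ n, t n ∧ (∀ n, ediam (t n) ≤ 1) ∧ ∑' n, m (ediam (t n)) < δ := by
  have hinf : (⨅ (t : ℕ → Set X) (_ : s ⊆ iUnion t) (_ : ∀ n, ediam (t n) ≤ 1),
      ∑' n, ⨆ _ : (t n).Nonempty, m (ediam (t n))) < δ := by
    refine lt_of_le_of_lt ?_ hδ
    rw [← hs, Measure.mkMetric_apply]
    exact le_iSup₂_of_le (1 : ℝ≥0∞) one_pos le_rfl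
  simp only [iInf_lt_iff] at hinf
  obtain ⟨t, hst, htdiam, ht⟩ := hinf
  refine ⟨t, hst, htdiam, lt_of_eq_of_lt (tsum_congr fun n => ?_) ht⟩
  rcases (t n).eq_empty_or_nonempty with hn | hn
  · simp [hn, hm]
  · exact (ciSup_const (hι := ⟨hn⟩)).symm

theorem exists_lambdaCover {X ι : Type*} [PseudoEMetricSpace X] (t : ℕ → ι → Set X)
    (ε : ℕ → ℝ≥0∞) (slot : ℕ × ι → ℕ) (hslot : Injective slot) (hcov : ∀ k x, ∃ i, x ∈ t k i)
    (hdiam : ∀ k i, ediam (t k i) ≤ ε (slot (k, i))) :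
    ∃ U : ℕ → Set X, (∀ x, ∃ n, x ∈ U n) ∧ (∀ n, ediam (U n) ≤ ε n) ∧
      ∀ x, {n | x ∈ U n}.Infinite := by
  set U := extend slot (uncurry t) fun _ => ∅
  have hU : ∀ k i, U (slot (k, i)) = t k i := fun k i => hslot.extend_apply _ _ (k, i)
  have hinf : ∀ x, {n | x ∈ U n}.Infinite := fun x => by
    choose i hi using fun k => hcov k x
    refine infinite_of_injective_forall_mem (f := fun k => slot (k, i k))
      (fun k k' h => (Prod.mk.inj (hslot h)).1) fun k => ?_
    show x ∈ U (slot (k, i k))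
    rw [hU]
    exact hi k
  refine ⟨U, fun x => (hinf x).nonempty, fun n => ?_, hinf⟩
  by_cases hn : ∃ p, slot p = n
  · obtain ⟨⟨k, i⟩, rfl⟩ := hn
    exact (hU k i).symm ▸ hdiam k i
  · simp [U, extend_apply' _ _ _ hn]

theorem exists_injective_natCast_add_one_mul_lt_one {a : ℕ → ℕ → ℝ≥0∞}
    (ha : ∀ k, ∑' i, a k i < (2 ^ (k + 2))⁻¹) :
    ∃ slot : ℕ × ℕ → ℕ, Injective slot ∧ ∀ k i, (slot (k, i) + 1 : ℝ≥0∞) * a k i < 1 := by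
  choose σ hσ hσle using fun k => exists_injective_add_one_mul_le_two_mul_tsum (a k)
  refine ⟨fun p => twoAdicPair p.1 (σ p.1 p.2), fun p q h => ?_, fun k i => ?_⟩
  · obtain ⟨hk, hi⟩ := Prod.mk.inj <|
      @twoAdicPair_injective (p.1, σ p.1 p.2) (q.1, σ q.1 q.2) h
    exact Prod.ext hk (hσ q.1 (hk ▸ hi))
  calc ((twoAdicPair k (σ k i) : ℝ≥0∞) + 1) * a k i
      ≤ 2 ^ (k + 1) * ((σ k i + 1) * a k i) := by
        rw [← mul_assoc]; gcongr; exact_mod_cast twoAdicPair_add_one_le k (σ k i)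
    _ ≤ 2 ^ (k + 1) * (2 * ∑' j, a k j) := by
        gcongr (2 : ℝ≥0∞) ^ (k + 1) * ?_
        exact hσle k i
    _ < 2 ^ (k + 2) * (2 ^ (k + 2))⁻¹ := by
        rw [← mul_assoc, ← pow_succ]
        exact ENNReal.mul_lt_mul_right (by positivity) (by simp) (ha k)
    _ = 1 := ENNReal.mul_inv_cancel (by positivity) (by simp)

/-- For every sequence of positive reals there is a Hausdorff function `h` such that any
metric space without isolated points with `H^h(X) = 0` admits an `ε`-fine `λ`-cover. -/
theorem stmt2 (ε : ℕ → ℝ) (hε : ∀ n, 0 < ε n) :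
    ∃ h : ℝ → ℝ, IsHausdorffFn h ∧
      ∀ (X : Type) [MetricSpace X] [MeasurableSpace X] [BorelSpace X],
        (∀ x : X, x ∈ closure ({x}ᶜ)) →
        hMeas h (Set.univ : Set X) = 0 →
        ∃ U : ℕ → Set X,
          (∀ x : X, ∃ n, x ∈ U n) ∧
          (∀ n, EMetric.diam (U n) ≤ ENNReal.ofReal (ε n)) ∧
          (∀ x : X, {n | x ∈ U n}.Infinite) := by
  have hpos := gaugeSeq_pos hε
  have hlim := tendsto_gaugeSeq hε
  refine ⟨stepGauge (gaugeSeq ε), isHausdorffFn_stepGauge hpos gaugeSeq_antitone hlim,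
    fun X _ _ _ _ hnull => ?_⟩
  have hcover (k : ℕ) : ∃ t : ℕ → Set X, univ ⊆ ⋃ i, t i ∧ (∀ i, ediam (t i) ≤ 1) ∧
      ∑' i, ENNReal.ofReal (stepGauge (gaugeSeq ε) (ediam (t i)).toReal) < (2 ^ (k + 2))⁻¹ :=
    exists_cover_tsum_lt_of_mkMetric_eq_zero (by simp [stepGauge]) hnull (by simp)
  choose t htcov htdiam htsum using hcover
  obtain ⟨slot, hslot, hsmall⟩ := exists_injective_natCast_add_one_mul_lt_one htsum
  refine exists_lambdaCover t (fun n => ENNReal.ofReal (ε n)) slot hslot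
    (fun k x => mem_iUnion.1 (htcov k (mem_univ x))) fun k i => ?_
  have hfin : ediam (t k i) ≠ ∞ := ne_top_of_le_ne_top one_ne_top (htdiam k i)
  exact (lt_ofReal_of_mul_ofReal_stepGauge_lt_one hpos gaugeSeq_antitone hlim hfin
    (hsmall k i)).le.trans (ENNReal.ofReal_le_ofReal (gaugeSeq_le _))
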